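/- Let Σ be a symmetric positive definite real C×C matrix with ‖I - Σ‖₂ < 1 (operator norm). Define the Newton iteration Σ₀ = I, Σ_k = (1/2)(3Σ_{k-1} - Σ_{k-1}³Σ). Then Σ_k converges to Σ^{-1/2}, the inverse of the unique positive definite square root of Σ. -/

import Mathlib

/-!
Every iterate is a polynomial in `Σ`, namely `Σ_k = p_k(Σ)` for the scalar Newton–Schulz iterates
`p_{k+1}(x) = (3 p_k(x) - p_k(x)^3 x) / 2`, so it suffices to show `p_k(x) → x^{-1/2}` on the
spectrum of `Σ`, which is finite. The condition `‖I - Σ‖₂ < 1` puts the spectrum in `(0, 2)`.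
There the error `e_k = 1 - √x p_k(x)` obeys `e_{k+1} = e_k^2 (3 - e_k) / 2`, so `e_1 ∈ [0, 1)`
and from then on the errors decrease and contract by the factor `e_1 (3 - e_1) / 2 < 1`.
-/

open Matrix

/-- Spectral (ℓ²) operator norm of a square real matrix. -/
noncomputable def opNorm2 {C : ℕ} (A : Matrix (Fin C) (Fin C) ℝ) : ℝ :=
  ‖Matrix.toEuclideanCLM (𝕜 := ℝ) A‖

open Filter Topology

noncomputable def newtonSchulz : ℕ → ℝ → ℝ
  | 0, _ => 1
  | k + 1, x => 1 / 2 * (3 * newtonSchulz k x - newtonSchulz k x ^ 3 * x)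

@[fun_prop]
lemma continuous_newtonSchulz (k : ℕ) : Continuous (newtonSchulz k) := by
  induction k with
  | zero => exact continuous_const
  | succ k ih =>
    show Continuous fun x => 1 / 2 * (3 * newtonSchulz k x - newtonSchulz k x ^ 3 * x)
    fun_prop

lemma tendsto_zero_of_newtonSchulz_error {e : ℕ → ℝ}
    (he : ∀ k, e (k + 1) = e k ^ 2 * (3 - e k) / 2) (h0 : 0 ≤ e 0) (h1 : e 0 < 1) :
    Tendsto e atTop (𝓝 0) := by
  have hbound : ∀ k, 0 ≤ e k ∧ e k ≤ e 0 := by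
    intro k
    induction k with
    | zero => exact ⟨h0, le_rfl⟩
    | succ k ih =>
      obtain ⟨hk0, hk1⟩ := ih
      have hk3 : 0 ≤ 3 - e k := by linarith
      rw [he]
      refine ⟨by positivity, ?_⟩
      nlinarith [mul_nonneg hk0
        (mul_nonneg (by linarith : 0 ≤ 1 - e k) (by linarith : 0 ≤ 2 - e k))]
  set q := e 0 * (3 - e 0) / 2 with hq
  have hq0 : 0 ≤ q := div_nonneg (mul_nonneg h0 (by linarith)) zero_le_two
  have hq1 : q < 1 := by nlinarith [mul_pos (by linarith : 0 < 1 - e 0) (by linarith : 0 < 2 - e 0)]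
  have hcontract : ∀ k, e (k + 1) ≤ q * e k := by
    intro k
    obtain ⟨hk0, hk1⟩ := hbound k
    rw [he]
    nlinarith [hq,
      mul_nonneg hk0 (mul_nonneg (sub_nonneg.2 hk1) (by linarith : 0 ≤ 3 - e k - e 0))]
  refine squeeze_zero (fun k => (hbound k).1) (fun k => le_geom hq0 k fun i _ => hcontract i) ?_
  simpa using (tendsto_pow_atTop_nhds_zero_of_lt_one hq0 hq1).mul_const (e 0)

lemma tendsto_newtonSchulz {x : ℝ} (hx0 : 0 < x) (hx2 : x < 2) :
    Tendsto (fun k => newtonSchulz k x) atTop (𝓝 (√x)⁻¹) := by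
  set s := √x
  have hs0 : 0 < s := Real.sqrt_pos.2 hx0
  have hs : s ^ 2 = x := Real.sq_sqrt hx0.le
  have herr : ∀ k, 1 - s * newtonSchulz (k + 1) x
      = (1 - s * newtonSchulz k x) ^ 2 * (3 - (1 - s * newtonSchulz k x)) / 2 := by
    intro k
    rw [newtonSchulz, ← hs]
    ring
  have herr1 : 1 - s * newtonSchulz 1 x = (1 - s) ^ 2 * (2 + s) / 2 := by
    rw [herr, newtonSchulz]
    ring
  have herr_lim : Tendsto (fun k => 1 - s * newtonSchulz (k + 1) x) atTop (𝓝 0) :=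
    tendsto_zero_of_newtonSchulz_error (fun k => herr (k + 1)) (by rw [herr1]; positivity)
      (by rw [herr1]; nlinarith [mul_pos hs0 (by linarith : 0 < 3 - s ^ 2)])
  rw [← tendsto_add_atTop_iff_nat 1]
  convert (herr_lim.const_sub 1).const_mul s⁻¹ using 2
  · field_simp
    ring
  · simp

section FunctionalCalculus

variable {A : Type*} [Ring A] [StarRing A] [Algebra ℝ A] [TopologicalSpace A]
  [ContinuousFunctionalCalculus ℝ A IsSelfAdjoint] {a : A}

lemma cfc_newtonSchulz_succ (ha : IsSelfAdjoint a) (k : ℕ) :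
    cfc (newtonSchulz (k + 1)) a
      = (1 / 2 : ℝ) • (3 • cfc (newtonSchulz k) a - cfc (newtonSchulz k) a ^ 3 * a) := by
  change cfc (fun x => 1 / 2 * (3 * newtonSchulz k x - newtonSchulz k x ^ 3 * x)) a = _
  rw [cfc_const_mul .., cfc_sub .., cfc_const_mul .., cfc_mul .., cfc_pow .., cfc_id' ℝ a,
    ← Nat.cast_smul_eq_nsmul ℝ]
  norm_num

lemma eq_cfc_newtonSchulz (ha : IsSelfAdjoint a) {f : ℕ → A} (h0 : f 0 = 1)
    (hf : ∀ k, f (k + 1) = (1 / 2 : ℝ) • (3 • f k - f k ^ 3 * a)) (k : ℕ) :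
    f k = cfc (newtonSchulz k) a := by
  induction k with
  | zero => exact h0.trans (cfc_const_one ℝ a).symm
  | succ k ih => rw [hf, ih, cfc_newtonSchulz_succ ha]

end FunctionalCalculus

lemma Matrix.IsHermitian.tendsto_cfc {n 𝕜 ι : Type*} [RCLike 𝕜] [Fintype n] [DecidableEq n]
    {A : Matrix n n 𝕜} (hA : A.IsHermitian) {l : Filter ι} {F : ι → ℝ → ℝ} {g : ℝ → ℝ}
    (h : ∀ x ∈ spectrum ℝ A, Tendsto (fun k => F k x) l (𝓝 (g x))) :
    Tendsto (fun k => cfc (F k) A) l (𝓝 (cfc g A)) := by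
  simp_rw [hA.cfc_eq, IsHermitian.cfc]
  have hc : Continuous fun d : n → 𝕜 =>
      Unitary.conjStarAlgAut 𝕜 _ hA.eigenvectorUnitary (diagonal d) :=
    ((Unitary.conjStarAlgAut 𝕜 _ hA.eigenvectorUnitary).toAlgEquiv.toLinearMap.comp
      (diagonalLinearMap n 𝕜 𝕜)).continuous_of_finiteDimensional
  refine hc.continuousAt.tendsto.comp (tendsto_pi_nhds.2 fun i => ?_)
  exact (RCLike.continuous_ofReal.tendsto _).comp (h _ (hA.eigenvalues_mem_spectrum_real i))

lemma abs_le_opNorm2_of_mem_spectrum {C : ℕ} {A : Matrix (Fin C) (Fin C) ℝ} {x : ℝ}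
    (hx : x ∈ spectrum ℝ A) : |x| ≤ opNorm2 A := by
  rw [← AlgEquiv.spectrum_eq (Matrix.toEuclideanCLM (𝕜 := ℝ) (n := Fin C))] at hx
  calc |x| ≤ opNorm2 A * ‖(1 : EuclideanSpace ℝ (Fin C) →L[ℝ] EuclideanSpace ℝ (Fin C))‖ :=
        spectrum.norm_le_norm_mul_of_mem hx
    _ ≤ opNorm2 A := mul_le_of_le_one_right (norm_nonneg _) ContinuousLinearMap.norm_id_le

lemma spectrum_subset_Ioo_of_opNorm2_one_sub_lt_one {C : ℕ} {A : Matrix (Fin C) (Fin C) ℝ}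
    (h : opNorm2 (1 - A) < 1) : spectrum ℝ A ⊆ Set.Ioo 0 2 := by
  intro x hx
  have hx' : 1 - x ∈ spectrum ℝ (1 - A) := by
    rw [← map_one (algebraMap ℝ _), ← spectrum.singleton_sub_eq]
    exact Set.sub_mem_sub rfl hx
  have := abs_lt.1 ((abs_le_opNorm2_of_mem_spectrum hx').trans_lt h)
  constructor <;> linarith [this.1, this.2]

open scoped ComplexOrder MatrixOrder in
lemma Matrix.PosDef.inv_eq_cfc_inv_sqrt {n 𝕜 : Type*} [RCLike 𝕜] [Fintype n] [DecidableEq n]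
    {S A : Matrix n n 𝕜} (hS : S.PosDef) (hA : A.PosDef) (hSA : S * S = A) :
    S⁻¹ = cfc (fun x => (√x)⁻¹) A := by
  have hsqrt : S = cfc Real.sqrt A := by
    rw [← CFC.sqrt_unique hSA hS.posSemidef.nonneg, CFC.sqrt_eq_real_sqrt A hA.posSemidef.nonneg,
      cfcₙ_eq_cfc]
  have hsqrt_ne : ∀ x ∈ spectrum ℝ A, √x ≠ 0 := fun x hx =>
    (Real.sqrt_pos.2 (hA.isStrictlyPositive.spectrum_pos hx)).ne'
  rw [cfc_inv Real.sqrt A hsqrt_ne (ha := hA.isHermitian.isSelfAdjoint), ← hsqrt,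
    nonsing_inv_eq_ringInverse]

theorem stmt7 {C : ℕ} (Sig : Matrix (Fin C) (Fin C) ℝ)
    (hSig : Sig.PosDef) (hnorm : opNorm2 (1 - Sig) < 1)
    (S : Matrix (Fin C) (Fin C) ℝ) (hS : S.PosDef) (hSsq : S * S = Sig)
    (f : ℕ → Matrix (Fin C) (Fin C) ℝ)
    (hf0 : f 0 = 1)
    (hfk : ∀ k, f (k + 1) = (1 / 2 : ℝ) • (3 • f k - f k ^ 3 * Sig)) :
    Filter.Tendsto f Filter.atTop (nhds S⁻¹) := by
  have hspec := spectrum_subset_Ioo_of_opNorm2_one_sub_lt_one hnorm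
  rw [funext (eq_cfc_newtonSchulz hSig.isHermitian hf0 hfk), hS.inv_eq_cfc_inv_sqrt hSig hSsq]
  exact hSig.isHermitian.tendsto_cfc fun x hx => tendsto_newtonSchulz (hspec hx).1 (hspec hx).2
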